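/- In a strongly connected directed graph G = (V, A) with a subset S ⊆ V such that G(V\S) is strongly connected, any two arcs e ∈ δ⁺(S), f ∈ δ⁻(S) whose S-endpoints lie in the same weakly-connected, strongly connected component S_i of G(S) can be extended to a directed closed walk of G that crosses the boundary δ(S) exactly twice (once via e and once via f). -/

import Mathlib

/-!
Leave `S` along `e`, go from `head e` to `tail f` inside the strongly connected `V \ S`, enter
along `f`, and go back from `head f` to `tail e` inside the strongly connected `Si`. The arcs of
the first connecting path have both ends outside `S` and those of the second both ends in
`Si ⊆ S`, so `e` and `f` are the only arcs of this closed walk that cross `δ(S)`.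
-/

section Walk

variable {V A : Type} (tail head : A → V)

def IsWalk : List A → V → V → Prop
  | [], u, v => u = v
  | a :: l, u, v => tail a = u ∧ IsWalk l (head a) v

variable {tail head}

lemma IsWalk.append {l m : List A} {u v w : V}
    (hl : IsWalk tail head l u v) (hm : IsWalk tail head m v w) :
    IsWalk tail head (l ++ m) u w := by
  induction l generalizing u with
  | nil => cases hl; exact hm
  | cons a l ih => exact ⟨hl.1, ih hl.2⟩

lemma exists_isWalk_of_reflTransGen {P : A → Prop} {r : V → V → Prop}
    (hr : ∀ x y, r x y → ∃ a, tail a = x ∧ head a = y ∧ P a)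
    {u v : V} (h : Relation.ReflTransGen r u v) :
    ∃ l : List A, IsWalk tail head l u v ∧ ∀ a ∈ l, P a := by
  induction h using Relation.ReflTransGen.head_induction_on with
  | refl => exact ⟨[], rfl, by simp⟩
  | head hxy _ ih =>
    obtain ⟨l, hl, hP⟩ := ih
    obtain ⟨a, rfl, rfl, ha⟩ := hr _ _ hxy
    exact ⟨a :: l, ⟨rfl, hl⟩, List.forall_mem_cons.2 ⟨ha, hP⟩⟩

lemma IsWalk.exists_vertices {l : List A} {u v : V} (h : IsWalk tail head l u v) :
    ∃ w : Fin (l.length + 1) → V, w 0 = u ∧ w (Fin.last _) = v ∧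
      ∀ j : Fin l.length, tail l[j] = w j.castSucc ∧ head l[j] = w j.succ := by
  induction l generalizing u with
  | nil => exact ⟨fun _ => u, rfl, h, fun j => j.elim0⟩
  | cons a l ih =>
    obtain ⟨w, hw0, hwlast, hw⟩ := ih h.2
    refine ⟨Fin.cons u w, rfl, hwlast, fun j => ?_⟩
    induction j using Fin.cases with
    | zero => exact ⟨h.1, hw0.symm⟩
    | succ i => exact hw i

end Walk

lemma List.eq_length_of_getElem_append_cons {α : Type*} {p : α → Prop} {l₁ l₂ : List α}
    {x : α} (h₁ : ∀ a ∈ l₁, ¬ p a) (h₂ : ∀ a ∈ l₂, ¬ p a) {j : ℕ}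
    (hj : j < (l₁ ++ x :: l₂).length) (hp : p (l₁ ++ x :: l₂)[j]) : j = l₁.length := by
  rcases lt_trichotomy j l₁.length with hlt | heq | hgt
  · rw [List.getElem_append_left hlt] at hp
    exact (h₁ _ (List.getElem_mem hlt) hp).elim
  · exact heq
  · obtain ⟨i, rfl⟩ : ∃ i, j = l₁.length + (i + 1) := ⟨j - l₁.length - 1, by omega⟩
    have hi : i < l₂.length := by simp only [List.length_append, List.length_cons] at hj; omega
    have : (l₁ ++ x :: l₂)[l₁.length + (i + 1)] = l₂[i] := by
      rw [List.getElem_append_right (by omega)]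
      simp
    exact (h₂ _ (List.getElem_mem hi) (this ▸ hp)).elim

theorem closed_walk_crossing_boundary_twice_general
    {V A : Type}
    (tail head : A → V)
    (S : Set V)
    (hVS : ∀ u ∉ S, ∀ v ∉ S, Relation.ReflTransGen
      (fun x y => ∃ a, tail a = x ∧ head a = y ∧ x ∉ S ∧ y ∉ S) u v)
    (Si : Set V) (hSiS : Si ⊆ S)
    (hSistrong : ∀ u ∈ Si, ∀ v ∈ Si, Relation.ReflTransGen
      (fun x y => ∃ a, tail a = x ∧ head a = y ∧ x ∈ Si ∧ y ∈ Si) u v)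
    (e f : A)
    (he : tail e ∈ Si ∧ head e ∉ S)
    (hf : tail f ∉ S ∧ head f ∈ Si) :
    ∃ (k : ℕ) (w : Fin (k + 1) → V) (es : Fin k → A) (j₁ j₂ : Fin k),
      (∀ j : Fin k, tail (es j) = w j.castSucc ∧ head (es j) = w j.succ) ∧
      w 0 = w (Fin.last k) ∧
      es j₁ = e ∧ es j₂ = f ∧
      (∀ j : Fin k, (tail (es j) ∈ S ∧ head (es j) ∉ S) → j = j₁) ∧
      (∀ j : Fin k, (tail (es j) ∉ S ∧ head (es j) ∈ S) → j = j₂) := by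
  obtain ⟨l₁, hl₁, hl₁S⟩ := exists_isWalk_of_reflTransGen (P := fun a => tail a ∉ S ∧ head a ∉ S)
    (fun _ _ ⟨a, hx, hy, hxS, hyS⟩ => ⟨a, hx, hy, hx ▸ hxS, hy ▸ hyS⟩)
    (hVS _ he.2 _ hf.1)
  obtain ⟨l₂, hl₂, hl₂S⟩ := exists_isWalk_of_reflTransGen (P := fun a => tail a ∈ S ∧ head a ∈ S)
    (fun _ _ ⟨a, hx, hy, hxSi, hySi⟩ => ⟨a, hx, hy, hSiS (hx ▸ hxSi), hSiS (hy ▸ hySi)⟩)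
    (hSistrong _ hf.2 _ he.1)
  set L := e :: (l₁ ++ f :: l₂)
  have hclosed : IsWalk tail head L (tail e) (tail e) := ⟨rfl, hl₁.append ⟨rfl, hl₂⟩⟩
  obtain ⟨w, hw0, hwlast, hw⟩ := hclosed.exists_vertices
  refine ⟨L.length, w, fun j => L[j], ⟨0, by simp [L]⟩, ⟨l₁.length + 1, by simp [L]⟩,
    hw, hw0.trans hwlast.symm, rfl, by simp [L], ?_, ?_⟩
  · rintro ⟨j, hj⟩ hout
    refine Fin.ext <| List.eq_length_of_getElem_append_cons
      (p := fun a => tail a ∈ S ∧ head a ∉ S) (l₁ := []) (by simp) ?_ hj hout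
    intro a ha ⟨htail, hhead⟩
    simp only [List.mem_append, List.mem_cons] at ha
    rcases ha with ha | rfl | ha
    · exact (hl₁S a ha).1 htail
    · exact hf.1 htail
    · exact hhead (hl₂S a ha).2
  · rintro ⟨j, hj⟩ hin
    refine Fin.ext <| List.eq_length_of_getElem_append_cons
      (p := fun a => tail a ∉ S ∧ head a ∈ S) (l₁ := e :: l₁) ?_ ?_ hj hin
    · intro a ha ⟨htail, hhead⟩
      rcases List.mem_cons.1 ha with rfl | ha
      · exact htail (hSiS he.1)
      · exact (hl₁S a ha).2 hhead
    · exact fun a ha ⟨htail, _⟩ => htail (hl₂S a ha).1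

/-- In a strongly connected digraph `G` with `S ⊆ V` such that `G(V\S)` is
strongly connected, any arc `e` leaving a strongly connected component `Si` of
`G(S)` and any arc `f` entering `Si` extend to a directed closed walk of `G`
crossing the boundary `δ(S)` exactly twice: once via `e` and once via `f`. -/
theorem closed_walk_crossing_boundary_twice
    {V A : Type} [Fintype V] [Fintype A]
    (tail head : A → V)
    (hstrong : ∀ u v : V, Relation.ReflTransGen
      (fun x y => ∃ a, tail a = x ∧ head a = y) u v)
    (S : Set V) (hne : S.Nonempty) (hproper : S ≠ Set.univ)
    (hVS : ∀ u ∉ S, ∀ v ∉ S, Relation.ReflTransGen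
      (fun x y => ∃ a, tail a = x ∧ head a = y ∧ x ∉ S ∧ y ∉ S) u v)
    (Si : Set V) (hSiS : Si ⊆ S) (hSine : Si.Nonempty)
    (hSistrong : ∀ u ∈ Si, ∀ v ∈ Si, Relation.ReflTransGen
      (fun x y => ∃ a, tail a = x ∧ head a = y ∧ x ∈ Si ∧ y ∈ Si) u v)
    (e f : A)
    (he : tail e ∈ Si ∧ head e ∉ S)
    (hf : tail f ∉ S ∧ head f ∈ Si) :
    ∃ (k : ℕ) (w : Fin (k + 1) → V) (es : Fin k → A) (j₁ j₂ : Fin k),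
      (∀ j : Fin k, tail (es j) = w j.castSucc ∧ head (es j) = w j.succ) ∧
      w 0 = w (Fin.last k) ∧
      es j₁ = e ∧ es j₂ = f ∧
      (∀ j : Fin k, (tail (es j) ∈ S ∧ head (es j) ∉ S) → j = j₁) ∧
      (∀ j : Fin k, (tail (es j) ∉ S ∧ head (es j) ∈ S) → j = j₂) :=
  closed_walk_crossing_boundary_twice_general tail head S hVS Si hSiS hSistrong e f he hf
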